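/- (Proposition 1, label consistency) Let d̃ be a pseudometric on tracks. Let a^(1),…,a^(N) and b^(1),…,b^(N) be estimates of true tracks u^(1),…,u^(N) with d̃(a^(m),u^(m)) ≤ E and d̃(u^(m),b^(m)) ≤ E for all m, and suppose d̃(u^(m),u^(n)) > 4E for all m ≠ n. Then the identity permutation uniquely minimizes π ↦ Σ_{m=1}^N d̃(a^(m), b^(π(m))) over all permutations π of {1,…,N}. -/

import Mathlib

/-- Proposition 1 (label consistency): if `d̃(a m, u m) ≤ E`, `d̃(u m, b m) ≤ E`
for all `m`, and `d̃(u m, u n) > 4E` for all `m ≠ n`, then the identity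
permutation uniquely minimizes `π ↦ ∑ m, d̃(a m, b (π m))` over all
permutations of `{1,…,N}`. -/
theorem identity_unique_optimal_matching {T : Type*} (dt : T → T → ℝ) (E : ℝ)
    (hnonneg : ∀ x y, 0 ≤ dt x y)
    (hsymm : ∀ x y, dt x y = dt y x)
    (htri : ∀ x y z, dt x z ≤ dt x y + dt y z)
    {N : ℕ} (a u b : Fin N → T)
    (ha : ∀ m, dt (a m) (u m) ≤ E)
    (hb : ∀ m, dt (u m) (b m) ≤ E)
    (hsep : ∀ m n, m ≠ n → 4 * E < dt (u m) (u n)) :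
    ∀ π : Equiv.Perm (Fin N), π ≠ 1 →
      ∑ m, dt (a m) (b m) < ∑ m, dt (a m) (b (π m)) := by
  intro π hπ
  obtain ⟨m, hm⟩ : ∃ m, π m ≠ m := by
    by_contra h
    push_neg at h
    exact hπ (Equiv.ext h)
  have hE : 0 ≤ E := le_trans (hnonneg (a m) (u m)) (ha m)
  have hdiag : ∀ i, dt (a i) (b i) ≤ 2 * E := by
    intro i
    calc dt (a i) (b i) ≤ dt (a i) (u i) + dt (u i) (b i) := htri _ _ _
      _ ≤ E + E := add_le_add (ha i) (hb i)
      _ = 2 * E := by ring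
  have hoff : ∀ i, π i ≠ i → 2 * E < dt (a i) (b (π i)) := by
    intro i hi
    have h1 : dt (u i) (u (π i)) ≤ dt (u i) (a i) + dt (a i) (b (π i)) + dt (b (π i)) (u (π i)) := by
      calc dt (u i) (u (π i)) ≤ dt (u i) (b (π i)) + dt (b (π i)) (u (π i)) := htri _ _ _
        _ ≤ (dt (u i) (a i) + dt (a i) (b (π i))) + dt (b (π i)) (u (π i)) :=
          add_le_add_left (htri _ _ _) _
    have h2 : 4 * E < dt (u i) (u (π i)) := hsep i (π i) (fun h => hi h.symm)
    have h3 : dt (u i) (a i) ≤ E := (hsymm _ _).symm ▸ ha i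
    have h4 : dt (b (π i)) (u (π i)) ≤ E := (hsymm _ _).symm ▸ hb (π i)
    linarith
  apply Finset.sum_lt_sum
  · intro i _
    by_cases hi : π i = i
    · rw [hi]
    · exact le_trans (hdiag i) (le_of_lt (hoff i hi))
  · exact ⟨m, Finset.mem_univ m, lt_of_le_of_lt (hdiag m) (hoff m hm)⟩
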